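/- arXiv:1710.05228 — 2 statements merged into one kernel-verified Lean document; each statement's English description precedes it below -/
import Mathlib

section
/- A finite group G is of generalized D₄-type if and only if the exponent of G divides 4 and G is nilpotent of nilpotency class at most 2. Equivalently: there exist an n ≥ 0, a subgroup H of the n-fold direct product D₄ⁿ, and a surjective group homomorphism H → G, if and only if Monoid.exponent G divides 4 and G is nilpotent with nilpotency class ≤ 2. -/
noncomputable section

/-- The dihedral group of order 8. -/
abbrev D4 := DihedralGroup 4

/-- A finite group is of generalized `D₄`-type if it is (isomorphic to) a quotient of a
subgroup of `D₄ ^ n` for some `n ≥ 0`, i.e. there is a surjective homomorphism onto it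
from a subgroup of a finite power of `D₄`. -/
def IsGenD4Type (G : Type*) [Group G] : Prop :=
  ∃ (n : ℕ) (H : Subgroup (Fin n → D4)) (f : H →* G), Function.Surjective f

/-- A fixed algebraic closure of `ℚ`. -/
abbrev Qbar := AlgebraicClosure ℚ

/-- A finite extension `K/ℚ` inside `ℚ̄` is of generalized `D₄`-type if the Galois group over
`ℚ` of its Galois closure in `ℚ̄` is a group of generalized `D₄`-type. -/
def IsGenD4Ext (K : IntermediateField ℚ Qbar) : Prop :=
  FiniteDimensional ℚ K ∧
    IsGenD4Type ((IntermediateField.normalClosure ℚ K Qbar) ≃ₐ[ℚ] (IntermediateField.normalClosure ℚ K Qbar))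

/-- `ℚ(D₄^∞)`: the compositum inside `ℚ̄` of all finite extensions of `ℚ` of generalized
`D₄`-type. -/
def QD4inf : IntermediateField ℚ Qbar :=
  ⨆ K : {K : IntermediateField ℚ Qbar // IsGenD4Ext K}, K.1

/-- The field `ℚ(D₄^∞)`. -/
abbrev QD4K : Type := ↥QD4inf

/-- The group of points of an elliptic curve `E/ℚ` with coordinates in `ℚ(D₄^∞)`,
i.e. the points of the base change of `E` to `ℚ(D₄^∞)`. -/
abbrev Epts (W : WeierstrassCurve ℚ) : Type :=
  ((W.baseChange QD4K).toAffine).Point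

open Classical in
/-- The torsion subgroup of `E(ℚ(D₄^∞))`. -/
abbrev EptsTors (W : WeierstrassCurve ℚ) : AddSubgroup (Epts W) :=
  AddCommGroup.torsion (Epts W)

instance : Fact (Nat.Prime 5) := ⟨by norm_num⟩
instance : Fact (Nat.Prime 7) := ⟨by norm_num⟩
instance : Fact (Nat.Prime 13) := ⟨by norm_num⟩

open Classical in
/-- The `p`-primary component of `E(ℚ(D₄^∞))`: the subgroup of points of `p`-power order. -/
abbrev EptsPrimary (W : WeierstrassCurve ℚ) (p : ℕ) [Fact p.Prime] : AddSubgroup (Epts W) :=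
  AddCommGroup.primaryComponent (Epts W) p

/-- The `j`-invariants of elliptic curves over `ℚ` with complex multiplication. -/
def J_CM : Set ℚ :=
  {0, 1728, -3375, 8000, 54000, 287496, 16581375, -12288000, -32768, -884736,
    -884736000, -147197952000, -262537412640768000}


/-!
Subgroups and quotients of `D₄ⁿ` inherit exponent `4` and class `2`. Conversely, in a group of
class two every element of `⟨S, x⟩` can be written `h * x ^ a * ⁅k, x⁆` with `h, k ∈ ⟨S⟩`. If the
generators `xᵢ` are free with respect to `D₄` (every assignment `xᵢ ↦ dᵢ ∈ D₄` extends to a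
homomorphism), testing such an element against the assignments `x ↦ r`, `x ↦ 1`, and
`(xⱼ, xᵢ) ↦ (r, s)` shows by induction on the generators that homomorphisms to `D₄` separate points:
`r` has order `4`, matching the exponent, and `⁅r, s⁆ = r²` has order `2`, matching the order of
commutators in a group of exponent `4` and class `2`. The subgroup of `G × D₄^(G → D₄)` generated by
the points `(g, (f g)_f)` has such generators, so it embeds in `D₄^(G → D₄)` and maps onto `G`.
-/

open Subgroup
open scoped commutatorElement

section ClassTwo

variable {G : Type*} [Group G]

theorem lowerCentralSeries_two_eq_bot_iff :
    Subgroup.lowerCentralSeries (⊤ : Subgroup G) 2 = ⊥ ↔ ∀ a b : G, ⁅a, b⁆ ∈ center G := by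
  rw [Subgroup.lowerCentralSeries_succ, top_lowerCentralSeries_one,
    commutator_eq_bot_iff_le_centralizer, coe_top, centralizer_univ, commutator_def, commutator_le]
  simp

theorem exists_isNilpotent_nilpotencyClass_le_two_iff :
    (∃ _ : Group.IsNilpotent G, Group.nilpotencyClass G ≤ 2) ↔
      ∀ a b : G, ⁅a, b⁆ ∈ center G := by
  rw [← lowerCentralSeries_two_eq_bot_iff]
  constructor
  · rintro ⟨_, h⟩
    exact Subgroup.lowerCentralSeries_eq_bot_iff_nilpotencyClass_le.mpr h
  · intro h
    have := Subgroup.nilpotent_iff_lowerCentralSeries.mpr ⟨2, h⟩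
    exact ⟨this, Subgroup.lowerCentralSeries_eq_bot_iff_nilpotencyClass_le.mp h⟩

variable (hG : ∀ a b : G, ⁅a, b⁆ ∈ center G)
include hG

theorem commute_commutatorElement_of_central (a b g : G) : Commute ⁅a, b⁆ g :=
  (mem_center_iff.mp (hG a b) g).symm

theorem commutatorElement_mul_left_of_central (a b c : G) :
    ⁅a * b, c⁆ = ⁅a, c⁆ * ⁅b, c⁆ := by
  calc ⁅a * b, c⁆ = a * (⁅b, c⁆ * (c * a⁻¹ * c⁻¹)) := by group
    _ = a * (c * a⁻¹ * c⁻¹ * ⁅b, c⁆) := by rw [(commute_commutatorElement_of_central hG b c _).eq]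
    _ = ⁅a, c⁆ * ⁅b, c⁆ := by group

def commutatorLeftHom (c : G) : G →* G where
  toFun a := ⁅a, c⁆
  map_one' := commutatorElement_one_left c
  map_mul' a b := commutatorElement_mul_left_of_central hG a b c

theorem commutatorElement_inv_left_of_central (a c : G) : ⁅a⁻¹, c⁆ = ⁅a, c⁆⁻¹ :=
  map_inv (commutatorLeftHom hG c) a

theorem commutatorElement_pow_left_of_central (a c : G) (n : ℕ) : ⁅a ^ n, c⁆ = ⁅a, c⁆ ^ n :=
  map_pow (commutatorLeftHom hG c) a n

theorem commutatorElement_zpow_left_of_central (a c : G) (n : ℤ) : ⁅a ^ n, c⁆ = ⁅a, c⁆ ^ n :=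
  map_zpow (commutatorLeftHom hG c) a n

theorem commutatorElement_pow_right_of_central (a c : G) (n : ℕ) : ⁅a, c ^ n⁆ = ⁅a, c⁆ ^ n := by
  rw [← commutatorElement_inv, commutatorElement_pow_left_of_central hG, ← inv_pow,
    commutatorElement_inv]

theorem sq_mul_of_central (a b : G) : (a * b) ^ 2 = ⁅b, a⁆ * (a ^ 2 * b ^ 2) := by
  calc (a * b) ^ 2 = a * ⁅b, a⁆ * (a * b ^ 2) := by rw [sq]; group
    _ = ⁅b, a⁆ * a * (a * b ^ 2) := by rw [(commute_commutatorElement_of_central hG b a a).eq]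
    _ = ⁅b, a⁆ * (a ^ 2 * b ^ 2) := by group

/-- Expanding `(ba)⁴` gives `⁅a, b⁆⁶ = 1`, while `⁅a, b⁆⁴ = ⁅a⁴, b⁆ = 1`. -/
theorem commutatorElement_sq_of_pow_four (hG4 : ∀ g : G, g ^ 4 = 1) (a b : G) :
    ⁅a, b⁆ ^ 2 = 1 := by
  have h4 : ⁅a, b⁆ ^ 4 = 1 := by
    rw [← commutatorElement_pow_left_of_central hG, hG4, commutatorElement_one_left]
  have hsq : ⁅a ^ 2, b ^ 2⁆ = ⁅a, b⁆ ^ 4 := by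
    rw [commutatorElement_pow_left_of_central hG, commutatorElement_pow_right_of_central hG,
      ← pow_mul]
  calc ⁅a, b⁆ ^ 2 = ⁅a, b⁆ ^ 2 * (⁅a ^ 2, b ^ 2⁆ * ((b ^ 2) ^ 2 * (a ^ 2) ^ 2)) := by
        rw [hsq, h4, ← pow_mul, ← pow_mul, hG4, hG4]; simp
    _ = (b * a) ^ 4 := by
        rw [show 4 = 2 * 2 from rfl, pow_mul, sq_mul_of_central hG b a,
          (commute_commutatorElement_of_central hG a b _).mul_pow, sq_mul_of_central hG]
    _ = 1 := hG4 _

theorem exists_mul_zpow_mul_commutatorElement_of_mem_closure_insert {S : Set G} {x q : G}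
    (hq : q ∈ closure (insert x S)) :
    ∃ h ∈ closure S, ∃ a : ℤ, ∃ k ∈ closure S, q = h * x ^ a * ⁅k, x⁆ := by
  induction hq using closure_induction_left with
  | one => exact ⟨1, one_mem _, 0, 1, one_mem _, by simp⟩
  | mul_left g hg _ _ ih =>
    obtain ⟨h, hh, a, k, hk, rfl⟩ := ih
    rcases hg with rfl | hg
    · refine ⟨h, hh, a + 1, h⁻¹ * k, mul_mem (inv_mem hh) hk, ?_⟩
      calc g * (h * g ^ a * ⁅k, g⁆) = ⁅g, h⁆ * (h * g ^ (a + 1) * ⁅k, g⁆) := by group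
        _ = h * g ^ (a + 1) * (⁅g, h⁆ * ⁅k, g⁆) := by
          rw [← mul_assoc, (commute_commutatorElement_of_central hG g h _).eq, mul_assoc]
        _ = h * g ^ (a + 1) * ⁅h⁻¹ * k, g⁆ := by
          rw [commutatorElement_mul_left_of_central hG, commutatorElement_inv_left_of_central hG,
            commutatorElement_inv]
    · exact ⟨g * h, mul_mem (subset_closure hg) hh, a, k, hk, by simp only [mul_assoc]⟩
  | inv_mul_cancel g hg _ _ ih =>
    obtain ⟨h, hh, a, k, hk, rfl⟩ := ih
    rcases hg with rfl | hg
    · refine ⟨h, hh, a - 1, h * k, mul_mem hh hk, ?_⟩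
      calc g⁻¹ * (h * g ^ a * ⁅k, g⁆) = ⁅g⁻¹, h⁆ * (h * g ^ (a - 1) * ⁅k, g⁆) := by group
        _ = h * g ^ (a - 1) * (⁅g⁻¹, h⁆ * ⁅k, g⁆) := by
          rw [← mul_assoc, (commute_commutatorElement_of_central hG g⁻¹ h _).eq, mul_assoc]
        _ = h * g ^ (a - 1) * ⁅h * k, g⁆ := by
          rw [commutatorElement_mul_left_of_central hG, commutatorElement_inv_left_of_central hG,
            commutatorElement_inv]
    · exact ⟨g⁻¹ * h, mul_mem (inv_mem (subset_closure hg)) hh, a, k, hk,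
        by simp only [mul_assoc]⟩

end ClassTwo

namespace DihedralGroup

variable {n : ℕ}

theorem r_one_zpow_eq_one_iff (a : ℤ) : (r 1 : DihedralGroup n) ^ a = 1 ↔ (n : ℤ) ∣ a := by
  rw [← orderOf_dvd_iff_zpow_eq_one, orderOf_r_one]

theorem commutatorElement_r_sr (i j : ZMod n) : ⁅r i, sr j⁆ = r (2 * i) := by
  simp only [commutatorElement_def, r_mul_sr, inv_r, sr_mul_r, inv_sr, sr_mul_sr, r.injEq]
  ring

end DihedralGroup

section DihedralLaws

open DihedralGroup

variable {P : Type*} [Group P] {ι : Type*} (x : ι → P)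

theorem map_eq_of_mem_closure_image {M : Type*} [Group M] {φ ψ : P →* M} {s : Set ι}
    (h : ∀ i ∈ s, φ (x i) = ψ (x i)) {q : P} (hq : q ∈ closure (x '' s)) : φ q = ψ q :=
  MonoidHom.eqOn_closure (by rintro _ ⟨i, hi, rfl⟩; exact h i hi) hq

variable {x} (hx : ∀ f : ι → D4, ∃ φ : P →* D4, ∀ i, φ (x i) = f i)
include hx

theorem exists_map_eq_one_of_notMem (φ₀ : P →* D4) {j : ι} {s : Set ι} (hj : j ∉ s) :
    ∃ φ : P →* D4, φ (x j) = 1 ∧ (∀ i ≠ j, φ (x i) = φ₀ (x i)) ∧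
      ∀ q ∈ closure (x '' s), φ q = φ₀ q := by
  classical
  obtain ⟨φ, hφ⟩ := hx (Function.update (φ₀ ∘ x) j 1)
  have hφne (i : ι) (hi : i ≠ j) : φ (x i) = φ₀ (x i) := by
    rw [hφ, Function.update_of_ne hi, Function.comp_apply]
  refine ⟨φ, by rw [hφ, Function.update_self], hφne, fun q hq => ?_⟩
  exact map_eq_of_mem_closure_image x (fun i hi => hφne i (ne_of_mem_of_not_mem hi hj)) hq

variable (hP : ∀ a b : P, ⁅a, b⁆ ∈ center P) (hP4 : ∀ g : P, g ^ 4 = 1)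
include hP hP4

theorem commutatorElement_eq_one_of_forall_dihedralGroup (s : Finset ι) {i : ι} (hi : i ∉ s)
    {q : P} (hq : q ∈ closure (x '' s)) (h : ∀ φ : P →* D4, ⁅φ q, φ (x i)⁆ = 1) :
    ⁅q, x i⁆ = 1 := by
  classical
  induction s using Finset.induction_on generalizing q with
  | empty => simp_all
  | insert j t hjt ih =>
    rw [Finset.mem_insert, not_or] at hi
    rw [Finset.coe_insert, Set.image_insert_eq] at hq
    obtain ⟨k, hk, b, m, hm, rfl⟩ :=
      exists_mul_zpow_mul_commutatorElement_of_mem_closure_insert hP hq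
    have hkm : ⁅k * x j ^ b * ⁅m, x j⁆, x i⁆ = ⁅k, x i⁆ * ⁅x j, x i⁆ ^ b := by
      rw [commutatorElement_mul_left_of_central hP, commutatorElement_mul_left_of_central hP,
        commutatorElement_zpow_left_of_central hP,
        commutatorElement_eq_one_iff_commute.mpr (commute_commutatorElement_of_central hP _ _ _),
        mul_one]
    have hb : ⁅x j, x i⁆ ^ b = 1 := by
      obtain ⟨φ, hφ⟩ := hx (Pi.mulSingle j (r 1) * Pi.mulSingle i (sr 0))
      have hφt : ∀ y ∈ closure (x '' t), φ y = 1 := fun y hy =>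
        map_eq_of_mem_closure_image x (ψ := 1) (fun l hl => by
          simp [hφ, Pi.mulSingle_eq_of_ne (ne_of_mem_of_not_mem hl hjt),
            Pi.mulSingle_eq_of_ne (ne_of_mem_of_not_mem hl hi.2)]) hy
      have := h φ
      simp only [map_mul, map_zpow, map_commutatorElement, hφt k hk, hφt m hm, hφ, Pi.mul_apply,
        Pi.mulSingle_eq_same, Pi.mulSingle_eq_of_ne hi.1, Pi.mulSingle_eq_of_ne (Ne.symm hi.1),
        mul_one, one_mul, r_zpow, commutatorElement_one_left, commutatorElement_r_sr] at this
      rw [show (2 : ZMod 4) * b = ((2 * b : ℤ) : ZMod 4) by push_cast; rfl, ← r_one_zpow,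
        r_one_zpow_eq_one_iff] at this
      obtain ⟨c, rfl⟩ : 2 ∣ b := by omega
      rw [zpow_mul, zpow_two, ← sq, commutatorElement_sq_of_pow_four hP hP4, one_zpow]
    rw [hkm, hb, mul_one]
    refine ih hi.2 hk fun φ₀ => ?_
    obtain ⟨φ, hφj, hφi, hφt⟩ := exists_map_eq_one_of_notMem hx φ₀ (s := t) hjt
    have := h φ
    simp only [map_mul, map_zpow, map_commutatorElement, hφj, hφi i hi.1, one_zpow,
      commutatorElement_one_right, mul_one] at this
    rwa [hφt k hk] at this

theorem eq_one_of_forall_dihedralGroup (s : Finset ι) {q : P} (hq : q ∈ closure (x '' s))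
    (h : ∀ φ : P →* D4, φ q = 1) : q = 1 := by
  classical
  induction s using Finset.induction_on generalizing q with
  | empty => simp_all
  | insert j t hjt ih =>
    rw [Finset.coe_insert, Set.image_insert_eq] at hq
    obtain ⟨k, hk, a, m, hm, rfl⟩ :=
      exists_mul_zpow_mul_commutatorElement_of_mem_closure_insert hP hq
    have ha : x j ^ a = 1 := by
      obtain ⟨φ, hφ⟩ := hx (Pi.mulSingle j (r 1))
      have hφt : ∀ y ∈ closure (x '' t), φ y = 1 := fun y hy =>
        map_eq_of_mem_closure_image x (ψ := 1) (fun l hl => by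
          simp [hφ, Pi.mulSingle_eq_of_ne (ne_of_mem_of_not_mem hl hjt)]) hy
      have := h φ
      simp only [map_mul, map_zpow, map_commutatorElement, hφt k hk, hφt m hm, hφ,
        Pi.mulSingle_eq_same, commutatorElement_one_left, one_mul, mul_one,
        r_one_zpow_eq_one_iff] at this
      obtain ⟨c, rfl⟩ := this
      rw [zpow_mul, zpow_natCast, hP4, one_zpow]
    have hk1 : k = 1 := by
      refine ih hk fun φ₀ => ?_
      obtain ⟨φ, hφj, -, hφt⟩ := exists_map_eq_one_of_notMem hx φ₀ (s := t) hjt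
      have := h φ
      simp only [map_mul, map_zpow, map_commutatorElement, hφj, one_zpow,
        commutatorElement_one_right, mul_one] at this
      rwa [← hφt k hk]
    rw [ha, hk1, mul_one, one_mul] at h ⊢
    exact commutatorElement_eq_one_of_forall_dihedralGroup hx hP hP4 t hjt hm fun φ => by
      simpa only [map_commutatorElement] using h φ

end DihedralLaws

section DihedralGroupFour

theorem exponent_dihedralGroup_four : Monoid.exponent (DihedralGroup 4) = 4 := by
  rw [DihedralGroup.exponent]
  rfl

theorem exists_isNilpotent_dihedralGroup_four_nilpotencyClass_le_two :
    ∃ _ : Group.IsNilpotent (DihedralGroup 4), Group.nilpotencyClass (DihedralGroup 4) ≤ 2 :=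
  exists_isNilpotent_nilpotencyClass_le_two_iff.mpr (by decide)

variable (η : Type*) [Fintype η]

theorem exponent_pi_dihedralGroup_four_dvd : Monoid.exponent (η → DihedralGroup 4) ∣ 4 := by
  rw [Monoid.exponent_pi]
  exact Finset.lcm_dvd fun _ _ => exponent_dihedralGroup_four.dvd

theorem exists_isNilpotent_pi_dihedralGroup_four_nilpotencyClass_le_two :
    ∃ _ : Group.IsNilpotent (η → DihedralGroup 4),
      Group.nilpotencyClass (η → DihedralGroup 4) ≤ 2 := by
  obtain ⟨_, h⟩ := exists_isNilpotent_dihedralGroup_four_nilpotencyClass_le_two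
  exact ⟨inferInstance, by rw [Group.nilpotencyClass_pi]; exact Finset.sup_le fun _ _ => h⟩

end DihedralGroupFour

section

variable {G : Type*} [Group G]

theorem IsGenD4Type.exponent_dvd_four (hG : IsGenD4Type G) : Monoid.exponent G ∣ 4 := by
  obtain ⟨n, H, f, hf⟩ := hG
  exact (MonoidHom.exponent_dvd hf).trans
    ((Monoid.exponent_submonoid_dvd H.toSubmonoid).trans (exponent_pi_dihedralGroup_four_dvd _))

theorem IsGenD4Type.exists_isNilpotent_nilpotencyClass_le_two (hG : IsGenD4Type G) :
    ∃ _ : Group.IsNilpotent G, Group.nilpotencyClass G ≤ 2 := by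
  obtain ⟨n, H, f, hf⟩ := hG
  obtain ⟨_, h⟩ := exists_isNilpotent_pi_dihedralGroup_four_nilpotencyClass_le_two (Fin n)
  have := Group.nilpotent_of_surjective f hf
  exact ⟨this, (Group.nilpotencyClass_le_of_surjective f hf).trans
    ((Subgroup.nilpotencyClass_le H).trans h)⟩

theorem isGenD4Type_of_exponent_dvd_four_of_nilpotencyClass_le_two [Finite G]
    (hexp : Monoid.exponent G ∣ 4)
    (hnil : ∃ _ : Group.IsNilpotent G, Group.nilpotencyClass G ≤ 2) :
    IsGenD4Type G := by
  classical
  have := Fintype.ofFinite G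
  let e := Fintype.equivFin (G → D4)
  let P := G × (Fin (Fintype.card (G → D4)) → D4)
  have hP : ∀ a b : P, ⁅a, b⁆ ∈ center P := by
    obtain ⟨_, hG⟩ := hnil
    obtain ⟨_, hD⟩ := exists_isNilpotent_pi_dihedralGroup_four_nilpotencyClass_le_two
      (Fin (Fintype.card (G → D4)))
    exact exists_isNilpotent_nilpotencyClass_le_two_iff.mp
      ⟨inferInstance, by rw [Group.nilpotencyClass_prod]; exact max_le hG hD⟩
  have hP4 : ∀ g : P, g ^ 4 = 1 := Monoid.exponent_dvd_iff_forall_pow_eq_one.mp <| by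
    rw [Monoid.exponent_prod]
    exact lcm_dvd hexp (exponent_pi_dihedralGroup_four_dvd _)
  let x : G → P := fun g => (g, fun k => e.symm k g)
  let probe (f : G → D4) : P →* D4 := (Pi.evalMonoidHom _ (e f)).comp (MonoidHom.snd _ _)
  have hprobe (f : G → D4) (g : G) : probe f (x g) = f g := by
    show e.symm (e f) g = f g
    rw [e.symm_apply_apply]
  let Q := closure (x '' (Finset.univ : Finset G))
  let ψ : Q →* (Fin (Fintype.card (G → D4)) → D4) := (MonoidHom.snd _ _).comp Q.subtype
  have hψ : Function.Injective ψ := by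
    refine (injective_iff_map_eq_one ψ).mpr fun q hq1 => Subtype.ext ?_
    refine eq_one_of_forall_dihedralGroup (fun f => ⟨probe f, hprobe f⟩) hP hP4 Finset.univ
      q.2 fun φ => ?_
    rw [map_eq_of_mem_closure_image x (ψ := probe (φ ∘ x))
      (fun g _ => (hprobe (φ ∘ x) g).symm) q.2]
    exact congrFun hq1 (e (φ ∘ x))
  have hsurj : Function.Surjective ((MonoidHom.fst _ _).comp Q.subtype) :=
    fun g => ⟨⟨x g, subset_closure ⟨g, Finset.mem_coe.mpr (Finset.mem_univ g), rfl⟩⟩, rfl⟩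
  exact ⟨_, ψ.range, ((MonoidHom.fst _ _).comp Q.subtype).comp
    (MonoidHom.ofInjective hψ).symm.toMonoidHom,
    hsurj.comp (MonoidHom.ofInjective hψ).symm.surjective⟩

end

/-- A finite group is of generalized `D₄`-type if and only if its exponent divides 4 and it is
nilpotent of nilpotency class at most 2. -/
theorem isGenD4Type_iff_exponent_dvd_four_and_nilpotencyClass_le_two
    (G : Type*) [Group G] [Finite G] :
    IsGenD4Type G ↔
      Monoid.exponent G ∣ 4 ∧
        ∃ h : Group.IsNilpotent G, Group.nilpotencyClass G ≤ 2 :=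
  ⟨fun hG => ⟨hG.exponent_dvd_four, hG.exists_isNilpotent_nilpotencyClass_le_two⟩,
    fun ⟨hexp, hnil⟩ => isGenD4Type_of_exponent_dvd_four_of_nilpotencyClass_le_two hexp hnil⟩
end
end

section
/- For every positive integer n, the cyclotomic field ℚ(ζₙ) (the subfield of ℚ̄ generated by a primitive n-th root of unity) is contained in ℚ(D₄^∞) if and only if n divides 240. -/
noncomputable section

/-!
Since `D₄` has exponent `4`, so does every group of generalized `D₄`-type; hence `σ ^ 4` fixes
`ℚ(D₄^∞)` pointwise for every `σ ∈ Gal(ℚ̄/ℚ)`, and a normal subextension of `ℚ(D₄^∞)` has Galois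
group of exponent dividing `4`. Conversely, a finite abelian group of exponent dividing `4` is a
product of cyclic groups of order dividing `4`, each of which embeds into `D₄`. As
`Gal(ℚ(ζₙ)/ℚ) ≃ (ℤ/n)ˣ`, the theorem reduces to: `(ℤ/n)ˣ` has exponent dividing `4` iff `n ∣ 240`.
-/

open IntermediateField

lemma IsGenD4Type.pow_four_eq_one {G : Type*} [Group G] (h : IsGenD4Type G) (g : G) :
    g ^ 4 = 1 := by
  obtain ⟨n, H, f, hf⟩ := h
  obtain ⟨x, rfl⟩ := hf g
  have hD4 : ∀ d : D4, d ^ 4 = 1 := by decide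
  rw [← map_pow, show x ^ 4 = 1 from Subtype.ext (funext fun i => hD4 _), map_one]

lemma IsGenD4Type.of_surjective {G G' : Type*} [Group G] [Group G'] (h : IsGenD4Type G)
    (φ : G →* G') (hφ : Function.Surjective φ) : IsGenD4Type G' := by
  obtain ⟨n, H, f, hf⟩ := h
  exact ⟨n, H, φ.comp f, hφ.comp hf⟩

lemma isGenD4Type_of_injective {G ι : Type*} [Group G] [Finite ι] (φ : G →* (ι → D4))
    (hφ : Function.Injective φ) : IsGenD4Type G := by
  obtain ⟨n, ⟨e⟩⟩ := Finite.exists_equiv_fin ι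
  let ψ : G →* (Fin n → D4) := (MonoidHom.pi fun j => Pi.evalMonoidHom _ (e.symm j)).comp φ
  have hψ : Function.Injective ψ := fun a b hab =>
    hφ (funext fun i => by simpa [ψ] using congrFun hab (e i))
  exact ⟨n, ψ.range, (MonoidHom.ofInjective hψ).symm.toMonoidHom,
    (MonoidHom.ofInjective hψ).symm.surjective⟩

lemma exists_injective_zmod_of_dvd_orderOf {G : Type*} [Group G] {x : G} (hx : orderOf x ≠ 0)
    {m : ℕ} (hm : m ∣ orderOf x) : ∃ φ : Multiplicative (ZMod m) →* G, Function.Injective φ := by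
  set y := x ^ (orderOf x / m)
  have hy : Nat.card (Subgroup.zpowers y) = m := by
    rw [Nat.card_zpowers, orderOf_pow_orderOf_div hx hm]
  rw [← hy]
  exact ⟨(Subgroup.zpowers y).subtype.comp (zmodCyclicMulEquiv inferInstance).toMonoidHom,
    Subtype.val_injective.comp (MulEquiv.injective _)⟩

lemma isGenD4Type_of_pow_four_eq_one (G : Type*) [CommGroup G] [Finite G]
    (h : ∀ g : G, g ^ 4 = 1) : IsGenD4Type G := by
  classical
  obtain ⟨ι, _, d, -, ⟨e⟩⟩ := CommGroup.equiv_prod_multiplicative_zmod_of_finite G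
  have hd : ∀ i, d i ∣ orderOf (DihedralGroup.r 1 : D4) := fun i => by
    have : orderOf (e.symm (Pi.mulSingle i (.ofAdd 1))) = d i := by
      simp [MulEquiv.orderOf_eq, orderOf_piMulSingle, orderOf_ofAdd_eq_addOrderOf]
    rw [DihedralGroup.orderOf_r_one, ← this]
    exact orderOf_dvd_of_pow_eq_one (h _)
  choose φ hφ using fun i => exists_injective_zmod_of_dvd_orderOf (by simp) (hd i)
  refine isGenD4Type_of_injective ((MonoidHom.pi fun i => (φ i).comp (Pi.evalMonoidHom _ i)).comp
    e.toMonoidHom) fun a b hab => e.injective (funext fun i => hφ i ?_)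
  simpa using congrFun hab i

namespace ZMod

lemma forall_units_pow_eq_one_of_dvd {m n e : ℕ} [NeZero n] (hmn : m ∣ n)
    (h : ∀ u : (ZMod n)ˣ, u ^ e = 1) (u : (ZMod m)ˣ) : u ^ e = 1 := by
  obtain ⟨v, rfl⟩ := unitsMap_surjective hmn u
  rw [← map_pow, h, map_one]

lemma forall_units_pow_eq_one_mul_of_coprime {a b e : ℕ} (hab : a.Coprime b)
    (ha : ∀ u : (ZMod a)ˣ, u ^ e = 1) (hb : ∀ u : (ZMod b)ˣ, u ^ e = 1) (u : (ZMod (a * b))ˣ) :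
    u ^ e = 1 := by
  let φ := (Units.mapEquiv (chineseRemainder hab).toMulEquiv).trans MulEquiv.prodUnits
  apply φ.injective
  rw [map_pow, map_one]
  exact Prod.ext (ha _) (hb _)

lemma dvd_pow_sub_one_of_forall_units_pow_eq_one {n e : ℕ}
    (h : ∀ u : (ZMod n)ˣ, u ^ e = 1) {k : ℕ} (hk : k.Coprime n) : n ∣ k ^ e - 1 := by
  rcases Nat.eq_zero_or_pos (k ^ e) with hke | hke
  · simp [hke]
  have hcast : ((k ^ e : ℕ) : ZMod n) = ((1 : ℕ) : ZMod n) := by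
    simpa using congrArg Units.val (h (unitOfCoprime k hk))
  exact (Nat.modEq_iff_dvd' hke).1 ((natCast_eq_natCast_iff _ _ _).1 hcast).symm

theorem forall_units_pow_four_eq_one_iff_dvd_240 {n : ℕ} (hn : n ≠ 0) :
    (∀ u : (ZMod n)ˣ, u ^ 4 = 1) ↔ n ∣ 240 := by
  have : NeZero n := ⟨hn⟩
  constructor
  · intro h
    have hdvd : ∀ m, m ∣ n → ∀ k, k.Coprime m → m ∣ k ^ 4 - 1 := fun m hm _ hk =>
      dvd_pow_sub_one_of_forall_units_pow_eq_one (forall_units_pow_eq_one_of_dvd hm h) hk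
    -- `gcd (7 ^ 4 - 1) (11 ^ 4 - 1) = 240`, while `3 ^ 4 ≢ 1 [MOD 7]` and `2 ^ 4 ≢ 1 [MOD 11]`.
    have h7 : ¬ 7 ∣ n := fun h7 => by simpa using hdvd 7 h7 3 (by norm_num)
    have h11 : ¬ 11 ∣ n := fun h11 => by simpa using hdvd 11 h11 2 (by norm_num)
    have hc7 : Nat.Coprime 7 n := (Nat.Prime.coprime_iff_not_dvd (by norm_num)).2 h7
    have hc11 : Nat.Coprime 11 n := (Nat.Prime.coprime_iff_not_dvd (by norm_num)).2 h11
    simpa using Nat.dvd_gcd (hdvd n dvd_rfl 7 hc7) (hdvd n dvd_rfl 11 hc11)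
  · intro h240
    refine forall_units_pow_eq_one_of_dvd h240 ?_
    exact forall_units_pow_eq_one_mul_of_coprime (a := 16) (b := 15) (by norm_num)
      (by decide) (by decide)

end ZMod

/- Instance search equips `Qbar` and its subfields with `DivisionRing.toRatAlgebra`, which agrees
with the `ℚ`-algebra structures of `AlgebraicClosure` and `IntermediateField` only up to
unfolding; the declarations below restate the library facts in the form instance search finds. -/
namespace Qbar

instance : IsAlgClosure ℚ Qbar := AlgebraicClosure.instIsAlgClosure ℚ

instance (K : IntermediateField ℚ Qbar) : Normal ℚ (normalClosure ℚ K Qbar) :=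
  normalClosure.normal ℚ K Qbar

theorem normalClosure_of_normal (K : IntermediateField ℚ Qbar) [hK : Normal ℚ K] :
    normalClosure ℚ K Qbar = K :=
  @IntermediateField.normalClosure_of_normal _ _ _ _ _ K hK

theorem restrictNormalHom_apply (L : IntermediateField ℚ Qbar) [hL : Normal ℚ L]
    (σ : Qbar ≃ₐ[ℚ] Qbar) (x : L) : (AlgEquiv.restrictNormalHom L σ x : Qbar) = σ x :=
  @AlgEquiv.restrictNormalHom_apply _ _ _ _ _ L hL σ x

end Qbar

lemma IsGenD4Ext.pow_four_mem_fixingSubgroup {K : IntermediateField ℚ Qbar} (hK : IsGenD4Ext K)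
    (σ : Qbar ≃ₐ[ℚ] Qbar) : σ ^ 4 ∈ K.fixingSubgroup := by
  rintro ⟨x, hx⟩
  have hσ : AlgEquiv.restrictNormalHom (normalClosure ℚ K Qbar) (σ ^ 4) = 1 := by
    rw [map_pow]
    exact hK.2.pow_four_eq_one _
  have key := Qbar.restrictNormalHom_apply (normalClosure ℚ K Qbar) (σ ^ 4)
    ⟨x, K.le_normalClosure hx⟩
  rw [hσ] at key
  exact key.symm

lemma pow_four_mem_fixingSubgroup_QD4inf (σ : Qbar ≃ₐ[ℚ] Qbar) :
    σ ^ 4 ∈ QD4inf.fixingSubgroup := by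
  rw [← Subgroup.zpowers_le, ← le_iff_le]
  exact iSup_le fun K =>
    (le_iff_le _ _).2 (Subgroup.zpowers_le.2 (K.2.pow_four_mem_fixingSubgroup σ))

lemma pow_four_eq_one_of_le_QD4inf {K : IntermediateField ℚ Qbar} [Normal ℚ K]
    (hK : K ≤ QD4inf) (τ : K ≃ₐ[ℚ] K) : τ ^ 4 = 1 := by
  obtain ⟨σ, rfl⟩ := AlgEquiv.restrictNormalHom_surjective (K₁ := K) Qbar τ
  ext x
  rw [← map_pow, Qbar.restrictNormalHom_apply]
  exact pow_four_mem_fixingSubgroup_QD4inf σ ⟨x, hK x.2⟩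

lemma le_QD4inf_of_isGenD4Type {K : IntermediateField ℚ Qbar} [FiniteDimensional ℚ K]
    [Normal ℚ K] (h : IsGenD4Type (K ≃ₐ[ℚ] K)) : K ≤ QD4inf := by
  have hK : IsGenD4Ext K := by
    refine ⟨inferInstance, ?_⟩
    -- `IsGenD4Ext` stores the `CharZero` instance of the normal closure as an auxiliary proof,
    -- which blocks `rw`; `change` synthesizes it afresh.
    change IsGenD4Type Gal(normalClosure ℚ K Qbar/ℚ)
    rwa [Qbar.normalClosure_of_normal K]
  exact le_iSup (fun K : {K // IsGenD4Ext K} => K.1) ⟨K, hK⟩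

/-- For a positive integer `n`, the cyclotomic field `ℚ(ζₙ)` — the subfield of `ℚ̄` generated
by a primitive `n`-th root of unity — is contained in `ℚ(D₄^∞)` if and only if `n ∣ 240`. -/
theorem cyclotomic_le_QD4inf_iff_dvd_240 (n : ℕ) (hn : 0 < n) (ζ : Qbar)
    (hζ : IsPrimitiveRoot ζ n) :
    IntermediateField.adjoin ℚ {ζ} ≤ QD4inf ↔ n ∣ 240 := by
  have : NeZero n := ⟨hn.ne'⟩
  have : IsCyclotomicExtension {n} ℚ ℚ⟮ζ⟯ := hζ.intermediateField_adjoin_isCyclotomicExtension ℚ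
  have : FiniteDimensional ℚ ℚ⟮ζ⟯ := IsCyclotomicExtension.finiteDimensional {n} ℚ _
  have : Normal ℚ ℚ⟮ζ⟯ := (IsCyclotomicExtension.isGalois {n} ℚ ℚ⟮ζ⟯).to_normal
  let e : Gal(ℚ⟮ζ⟯/ℚ) ≃* (ZMod n)ˣ :=
    IsCyclotomicExtension.autEquivPow _ (Polynomial.cyclotomic.irreducible_rat hn)
  rw [← ZMod.forall_units_pow_four_eq_one_iff_dvd_240 hn.ne']
  constructor
  · intro hle u
    simpa using congrArg e (pow_four_eq_one_of_le_QD4inf hle (e.symm u))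
  · intro h4
    exact le_QD4inf_of_isGenD4Type
      ((isGenD4Type_of_pow_four_eq_one _ h4).of_surjective e.symm.toMonoidHom e.symm.surjective)
end
end
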